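/- Let L/K be a finite Galois extension of even degree n with Galois group G containing exactly k elements τ₁, …, τ_k of order 2, with fixed fields F₁, …, F_k respectively, and with remaining non-identity elements σ₁, σ₁⁻¹, …, σ_m, σ_m⁻¹ (so 1 + k + 2m = n). Then the K-linear map φ: L^{k+m} → Alt(L) defined by φ(b₁,…,b_k,c₁,…,c_m) = Σ_{i=1}^k f_{b_i,τ_i} + Σ_{j=1}^m f_{c_j,σ_j} is surjective, and its kernel, of K-dimension kn/2, consists precisely of the tuples (b₁, …, b_k, 0, …, 0) with b_i ∈ F_i for 1 ≤ i ≤ k. -/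

import Mathlib

variable {K L : Type*} [Field K] [Field L] [Algebra K L]

/-- The alternating bilinear form `f_{b,σ}(x,y) = Tr^L_K (b * (x * σ y - σ x * y))`,
where `Tr^L_K` is the trace form of the extension `L/K`. -/
noncomputable def galoisAltForm (b : L) (σ : L ≃ₐ[K] L) : (L →ₗ[K] L →ₗ[K] K) :=
  LinearMap.mk₂ K (fun x y => Algebra.trace K L (b * (x * σ y - σ x * y)))
    (fun x x' y => by
      try dsimp only
      rw [show b * ((x + x') * σ y - σ (x + x') * y)
            = b * (x * σ y - σ x * y) + b * (x' * σ y - σ x' * y) by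
          rw [map_add σ]; ring, map_add])
    (fun a x y => by
      try dsimp only
      rw [show b * ((a • x) * σ y - σ (a • x) * y)
            = a • (b * (x * σ y - σ x * y)) by
          rw [map_smul σ]
          simp only [smul_sub, smul_mul_assoc, mul_smul_comm, mul_sub], map_smul])
    (fun x y y' => by
      try dsimp only
      rw [show b * (x * σ (y + y') - σ x * (y + y'))
            = b * (x * σ y - σ x * y) + b * (x * σ y' - σ x * y') by
          rw [map_add σ]; ring, map_add])
    (fun a x y => by
      try dsimp only
      rw [show b * (x * σ (a • y) - σ x * (a • y))
            = a • (b * (x * σ y - σ x * y)) by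
          rw [map_smul σ]
          simp only [smul_sub, smul_mul_assoc, mul_smul_comm, mul_sub], map_smul])

/-- `b ↦ f_{b,σ}` as a `K`-linear map. -/
noncomputable def galoisAltFormL (σ : L ≃ₐ[K] L) : L →ₗ[K] (L →ₗ[K] L →ₗ[K] K) where
  toFun b := galoisAltForm b σ
  map_add' b b' := by
    ext x y
    simp only [galoisAltForm, LinearMap.mk₂_apply, LinearMap.add_apply]
    rw [← map_add, add_mul]
  map_smul' a b := by
    ext x y
    simp only [galoisAltForm, LinearMap.mk₂_apply, LinearMap.smul_apply, RingHom.id_apply]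
    rw [← map_smul, smul_mul_assoc]

/-- The space `Alt(L)` of all alternating `K`-bilinear forms on `L`. -/
def altSubspace (K L : Type*) [Field K] [Field L] [Algebra K L] :
    Submodule K (L →ₗ[K] L →ₗ[K] K) where
  carrier := {f | ∀ x : L, f x x = 0}
  add_mem' hf hg x := by simp [hf x, hg x]
  zero_mem' x := rfl
  smul_mem' a f hf x := by simp [hf x]

/-- The `K`-linear map `φ : L^{k+m} → Bil(L)`,
`φ(b₁,…,b_k,c₁,…,c_m) = ∑ᵢ f_{bᵢ,τᵢ} + ∑ⱼ f_{cⱼ,σⱼ}`. -/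
noncomputable def phiEven (k m : ℕ) (τ : Fin k → (L ≃ₐ[K] L)) (σ : Fin m → (L ≃ₐ[K] L)) :
    ((Fin k → L) × (Fin m → L)) →ₗ[K] (L →ₗ[K] L →ₗ[K] K) :=
  (∑ i, (galoisAltFormL (τ i)).comp
      ((LinearMap.proj i).comp (LinearMap.fst K (Fin k → L) (Fin m → L)))) +
  (∑ j, (galoisAltFormL (σ j)).comp
      ((LinearMap.proj j).comp (LinearMap.snd K (Fin k → L) (Fin m → L))))

/-!
Write `T_ρ(c)(x, y) = Tr(c x ρ(y))`. As `Tr ∘ σ⁻¹ = Tr`, we have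
`f_{b,σ} = T_σ(b) - T_{σ⁻¹}(σ⁻¹ b)`, so `φ(b, c) = ∑_ρ T_ρ(a_ρ)` with `a_1 = 0`,
`a_{τᵢ} = bᵢ - τᵢ bᵢ`, `a_{σⱼ} = cⱼ` and `a_{σⱼ⁻¹} = -σⱼ⁻¹ cⱼ`. Dedekind's independence of
characters and the nondegeneracy of the trace form make `a ↦ ∑_ρ T_ρ(a_ρ)` injective, which
gives the kernel, of dimension `∑ᵢ [Fᵢ : K] = kn/2`. The image therefore has dimension
`(k + m)n - kn/2 = n(n - 1)/2`, while an alternating form is determined by its values on the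
pairs `(eᵢ, eⱼ)`, `i < j`, of a basis; so the image is all of `Alt(L)`.
-/

open Module

section AlternatingForms

variable {K V : Type*} [Field K] [AddCommGroup V] [Module K V] [FiniteDimensional K V]

theorem finrank_le_choose_two_of_forall_isAlt (W : Submodule K (V →ₗ[K] V →ₗ[K] K))
    (hW : ∀ B ∈ W, LinearMap.IsAlt B) : finrank K W ≤ (finrank K V).choose 2 := by
  let b := finBasis K V
  let eval : W →ₗ[K] ({p : Fin (finrank K V) × Fin (finrank K V) // p.1 < p.2} → K) :=
    { toFun := fun B p => (B : V →ₗ[K] V →ₗ[K] K) (b p.1.1) (b p.1.2)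
      map_add' := fun _ _ => rfl
      map_smul' := fun _ _ => rfl }
  have heval : Function.Injective eval := fun B B' h =>
    Subtype.ext <| LinearMap.ext_basis b b fun i j => by
      rcases lt_trichotomy i j with hij | rfl | hji
      · exact congrFun h ⟨(i, j), hij⟩
      · rw [hW B B.2, hW B' B'.2]
      · rw [← (hW B B.2).neg, ← (hW B' B'.2).neg]
        exact congrArg Neg.neg (congrFun h ⟨(j, i), hji⟩)
  calc finrank K W ≤ finrank K ({p : Fin (finrank K V) × Fin (finrank K V) // p.1 < p.2} → K) :=
        LinearMap.finrank_le_finrank_of_injective heval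
    _ = (finrank K V).choose 2 := by
      rw [finrank_fintype_fun_eq_card, Fintype.card_subtype,
        Fintype.card_product_filter_lt, Fintype.card_fin]

end AlternatingForms

section TwistedTraceForm

variable (K) in
noncomputable def twistedTraceForm (ρ : L ≃ₐ[K] L) : L →ₗ[K] L →ₗ[K] L →ₗ[K] K :=
  (LinearMap.mul K L).compr₂ ((Algebra.traceForm K L).compl₂ ρ.toLinearMap)

theorem twistedTraceForm_apply (ρ : L ≃ₐ[K] L) (c x y : L) :
    twistedTraceForm K ρ c x y = Algebra.trace K L (c * x * ρ y) := rfl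

theorem galoisAltForm_eq_twistedTraceForm_sub (b : L) (σ : L ≃ₐ[K] L) :
    galoisAltForm b σ = twistedTraceForm K σ b - twistedTraceForm K σ⁻¹ (σ⁻¹ b) := by
  ext x y
  have hσ : Algebra.trace K L (σ⁻¹ b * x * σ⁻¹ y) = Algebra.trace K L (b * σ x * y) := by
    rw [← Algebra.trace_eq_of_algEquiv σ]
    simp only [map_mul, AlgEquiv.aut_inv, AlgEquiv.apply_symm_apply]
  simp only [LinearMap.sub_apply, twistedTraceForm_apply, hσ, galoisAltForm, LinearMap.mk₂_apply,
    ← map_sub]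
  ring_nf

theorem galoisAltForm_eq_twistedTraceForm_of_inv_eq {b : L} {τ : L ≃ₐ[K] L} (hτ : τ⁻¹ = τ) :
    galoisAltForm b τ = twistedTraceForm K τ (b - τ b) := by
  rw [galoisAltForm_eq_twistedTraceForm_sub, hτ, map_sub]

variable [FiniteDimensional K L] [Algebra.IsSeparable K L]

theorem eq_zero_of_sum_twistedTraceForm_eq_zero {ι : Type*} [Fintype ι] {e : ι → (L ≃ₐ[K] L)}
    (he : Function.Injective e) {c : ι → L} (hc : ∑ s, twistedTraceForm K (e s) (c s) = 0) :
    c = 0 := by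
  have hli : LinearIndependent L fun s => ((e s : L →ₐ[K] L) : L →ₗ[K] L) :=
    (linearIndependent_algHom_toLinearMap K L L).comp _
      fun s t h => he (AlgEquiv.coe_toAlgHom_injective h)
  refine funext <| Fintype.linearIndependent_iff.mp hli c (LinearMap.ext fun y => ?_)
  refine (traceForm_nondegenerate K L).1 _ fun x => ?_
  have hxy := LinearMap.congr_fun₂ hc x y
  simp only [LinearMap.sum_apply, twistedTraceForm_apply, LinearMap.zero_apply] at hxy
  simpa [Algebra.traceForm_apply, Finset.sum_mul, mul_right_comm _ _ x] using hxy

end TwistedTraceForm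

theorem galoisAltForm_mem_altSubspace (b : L) (σ : L ≃ₐ[K] L) :
    galoisAltForm b σ ∈ altSubspace K L := fun x => by
  simp [galoisAltForm, mul_comm x]

theorem IntermediateField.mem_fixedField_zpowers_iff {g : L ≃ₐ[K] L} {x : L} :
    x ∈ fixedField (Subgroup.zpowers g) ↔ g x = x := by
  rw [mem_fixedField_iff, Subgroup.forall_mem_zpowers]
  exact MulAction.mem_fixedBy_zpowers_iff_mem_fixedBy (g := g) (a := x)

theorem IntermediateField.finrank_fixedField_zpowers_mul_orderOf [FiniteDimensional K L]
    (g : L ≃ₐ[K] L) :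
    finrank K (fixedField (Subgroup.zpowers g)) * orderOf g = finrank K L := by
  rw [← Nat.card_zpowers, ← finrank_fixedField_eq_card, Module.finrank_mul_finrank]

section PhiEven

variable {k m : ℕ} (τ : Fin k → (L ≃ₐ[K] L)) (σ : Fin m → (L ≃ₐ[K] L))

def autEnum : Unit ⊕ (Fin k ⊕ (Fin m ⊕ Fin m)) → (L ≃ₐ[K] L) :=
  Sum.elim (fun _ => 1) (Sum.elim τ (Sum.elim σ fun j => (σ j)⁻¹))

def phiEvenCoeff (p : (Fin k → L) × (Fin m → L)) : Unit ⊕ (Fin k ⊕ (Fin m ⊕ Fin m)) → L :=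
  Sum.elim 0 (Sum.elim (fun i => p.1 i - τ i (p.1 i)) (Sum.elim p.2 fun j => -(σ j)⁻¹ (p.2 j)))

theorem phiEven_apply (p : (Fin k → L) × (Fin m → L)) :
    phiEven k m τ σ p = ∑ i, galoisAltForm (p.1 i) (τ i) + ∑ j, galoisAltForm (p.2 j) (σ j) := by
  simp only [phiEven, LinearMap.add_apply, LinearMap.sum_apply, LinearMap.comp_apply,
    LinearMap.fst_apply, LinearMap.snd_apply, LinearMap.proj_apply]
  rfl

theorem range_phiEven_le : LinearMap.range (phiEven k m τ σ) ≤ altSubspace K L := by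
  rintro _ ⟨p, rfl⟩
  rw [phiEven_apply]
  exact add_mem (sum_mem fun i _ => galoisAltForm_mem_altSubspace _ _)
    (sum_mem fun j _ => galoisAltForm_mem_altSubspace _ _)

theorem phiEven_apply_eq_sum_twistedTraceForm (hτ : ∀ i, (τ i)⁻¹ = τ i)
    (p : (Fin k → L) × (Fin m → L)) :
    phiEven k m τ σ p = ∑ s, twistedTraceForm K (autEnum τ σ s) (phiEvenCoeff τ σ p s) := by
  simp only [phiEven_apply, Fintype.sum_sum_type, Fintype.sum_unique, autEnum, phiEvenCoeff,
    Sum.elim_inl, Sum.elim_inr, Pi.zero_apply, map_zero, zero_add, ← Finset.sum_add_distrib,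
    galoisAltForm_eq_twistedTraceForm_of_inv_eq (hτ _), galoisAltForm_eq_twistedTraceForm_sub,
    map_neg, ← sub_eq_add_neg]

theorem mem_ker_phiEven_iff [FiniteDimensional K L] [Algebra.IsSeparable K L]
    (hτ : ∀ i, (τ i)⁻¹ = τ i) (he : Function.Injective (autEnum τ σ))
    (p : (Fin k → L) × (Fin m → L)) :
    p ∈ LinearMap.ker (phiEven k m τ σ) ↔
      (∀ i, p.1 i ∈ IntermediateField.fixedField (Subgroup.zpowers (τ i))) ∧ p.2 = 0 := by
  have hcoeff : phiEvenCoeff τ σ p = 0 ↔ (∀ i, τ i (p.1 i) = p.1 i) ∧ p.2 = 0 := by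
    simp only [phiEvenCoeff, funext_iff, Sum.forall, Sum.elim_inl, Sum.elim_inr, Pi.zero_apply,
      sub_eq_zero, neg_eq_zero, EmbeddingLike.map_eq_zero_iff, and_self, forall_const, true_and,
      @eq_comm _ (p.1 _)]
  rw [LinearMap.mem_ker, phiEven_apply_eq_sum_twistedTraceForm τ σ hτ]
  simp only [IntermediateField.mem_fixedField_zpowers_iff, ← hcoeff]
  refine ⟨eq_zero_of_sum_twistedTraceForm_eq_zero he, fun h => ?_⟩
  simp [h]

theorem finrank_ker_phiEven [FiniteDimensional K L] [Algebra.IsSeparable K L]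
    (hτ : ∀ i, (τ i)⁻¹ = τ i) (he : Function.Injective (autEnum τ σ)) :
    finrank K (LinearMap.ker (phiEven k m τ σ)) =
      ∑ i, finrank K (IntermediateField.fixedField (Subgroup.zpowers (τ i))) := by
  let F i := IntermediateField.fixedField (Subgroup.zpowers (τ i))
  let J : (Π i, F i) →ₗ[K] (Fin k → L) × (Fin m → L) :=
    LinearMap.inl K _ _ ∘ₗ LinearMap.pi fun i => (F i).val.toLinearMap ∘ₗ LinearMap.proj i
  have hJ : Function.Injective J := fun b b' h =>
    funext fun i => Subtype.ext (congrFun (congrArg Prod.fst h) i)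
  have hrange : LinearMap.range J = LinearMap.ker (phiEven k m τ σ) := by
    ext p
    rw [mem_ker_phiEven_iff τ σ hτ he]
    constructor
    · rintro ⟨b, rfl⟩
      exact ⟨fun i => (b i).2, rfl⟩
    · rintro ⟨hp₁, hp₂⟩
      exact ⟨fun i => ⟨p.1 i, hp₁ i⟩, Prod.ext rfl hp₂.symm⟩
  rw [← hrange, LinearMap.finrank_range_of_inj hJ, finrank_pi_fintype]

end PhiEven

theorem statement10_general [FiniteDimensional K L] [IsGalois K L]
    (n k m : ℕ) (hn : Module.finrank K L = n) (hkm : 1 + k + 2 * m = n)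
    (τ : Fin k → (L ≃ₐ[K] L)) (σ : Fin m → (L ≃ₐ[K] L))
    (hτ : ∀ i, orderOf (τ i) = 2)
    (henum : Function.Bijective
      (Sum.elim (fun _ : Unit => (1 : L ≃ₐ[K] L))
        (Sum.elim τ (Sum.elim σ fun j => (σ j)⁻¹)) :
          Unit ⊕ (Fin k ⊕ (Fin m ⊕ Fin m)) → (L ≃ₐ[K] L))) :
    LinearMap.range (phiEven k m τ σ) = altSubspace K L ∧
    Module.finrank K (LinearMap.ker (phiEven k m τ σ)) = k * n / 2 ∧
    (∀ p : (Fin k → L) × (Fin m → L), p ∈ LinearMap.ker (phiEven k m τ σ) ↔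
      (∀ i, p.1 i ∈ IntermediateField.fixedField (Subgroup.zpowers (τ i))) ∧
        p.2 = 0) := by
  have hτinv i : (τ i)⁻¹ = τ i := inv_eq_self_of_orderOf_eq_two (hτ i)
  have hker : finrank K (LinearMap.ker (phiEven k m τ σ)) * 2 = k * n := by
    calc finrank K (LinearMap.ker (phiEven k m τ σ)) * 2
        = ∑ i, finrank K (IntermediateField.fixedField (Subgroup.zpowers (τ i))) *
            orderOf (τ i) := by
          simp only [finrank_ker_phiEven τ σ hτinv henum.injective, Finset.sum_mul, hτ]
      _ = k * n := by
          simp [IntermediateField.finrank_fixedField_zpowers_mul_orderOf, hn]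
  have hdomain : finrank K ((Fin k → L) × (Fin m → L)) = (k + m) * n := by
    rw [finrank_prod, finrank_pi_fintype, finrank_pi_fintype]
    simp [hn, add_mul]
  have hrank := LinearMap.finrank_range_add_finrank_ker (V := (Fin k → L) × (Fin m → L))
    (V₂ := L →ₗ[K] L →ₗ[K] K) (phiEven k m τ σ)
  -- instance search misses `AddCommGroup` on submodules of `L →ₗ[K] L →ₗ[K] K`: name the space
  refine ⟨Submodule.eq_of_le_of_finrank_le (V := L →ₗ[K] L →ₗ[K] K) (range_phiEven_le τ σ) ?_,
    by omega, mem_ker_phiEven_iff τ σ hτinv henum.injective⟩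
  calc finrank K (altSubspace K L) ≤ n.choose 2 :=
        hn ▸ finrank_le_choose_two_of_forall_isAlt _ fun B hB => hB
    _ ≤ finrank K (LinearMap.range (phiEven k m τ σ)) := by
        rw [Nat.choose_two_right]
        refine Nat.div_le_of_le_mul ?_
        have : n - 1 = k + 2 * m := by omega
        rw [this]
        nlinarith

/-- for `n` even, with `τ₁,…,τ_k` the elements of `G` of order 2 (with
fixed fields `Fᵢ`) and the remaining non-identity elements enumerated as
`σ₁, σ₁⁻¹, …, σ_m, σ_m⁻¹` (so `1 + k + 2m = n`), the map `φ` above is surjective onto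
`Alt(L)` and its kernel, of dimension `kn/2`, consists exactly of the tuples
`(b₁,…,b_k,0,…,0)` with `bᵢ ∈ Fᵢ`. -/
theorem statement10 [FiniteDimensional K L] [IsGalois K L]
    (n k m : ℕ) (hn : Module.finrank K L = n) (hkm : 1 + k + 2 * m = n)
    (τ : Fin k → (L ≃ₐ[K] L)) (σ : Fin m → (L ≃ₐ[K] L))
    (hτ : ∀ i, orderOf (τ i) = 2) (hσ : ∀ j, orderOf (σ j) ≠ 2)
    (henum : Function.Bijective
      (Sum.elim (fun _ : Unit => (1 : L ≃ₐ[K] L))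
        (Sum.elim τ (Sum.elim σ fun j => (σ j)⁻¹)) :
          Unit ⊕ (Fin k ⊕ (Fin m ⊕ Fin m)) → (L ≃ₐ[K] L))) :
    LinearMap.range (phiEven k m τ σ) = altSubspace K L ∧
    Module.finrank K (LinearMap.ker (phiEven k m τ σ)) = k * n / 2 ∧
    (∀ p : (Fin k → L) × (Fin m → L), p ∈ LinearMap.ker (phiEven k m τ σ) ↔
      (∀ i, p.1 i ∈ IntermediateField.fixedField (Subgroup.zpowers (τ i))) ∧
        p.2 = 0) :=
  statement10_general n k m hn hkm τ σ hτ henum
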